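/- Let G₁ and G₂ be finite simple graphs with n₁, m₁ and n₂, m₂ vertices and edges, and let ∅ ≠ U ⊆ V(G₂). Then F(G₁ Π G₂(U)) = |U|·F(G₁) + n₁F(G₂) + 3M₁(G₁)·Σ_{v∈U} d_{G₂}(v) + 6m₁·Σ_{v∈U} d_{G₂}(v)², where Π denotes the generalized hierarchical product. -/

import Mathlib

open Finset

/-- Degree of a vertex: the number of its neighbors. -/
noncomputable def degN {V : Type*} (G : SimpleGraph V) (v : V) : ℕ :=
  Nat.card (G.neighborSet v)

/-- F-index: the sum of cubes of the vertex degrees. -/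
noncomputable def Findex {V : Type*} [Fintype V] (G : SimpleGraph V) : ℕ :=
  ∑ v, (degN G v) ^ 3

/-- First Zagreb index: the sum of squares of the vertex degrees. -/
noncomputable def zagrebM1 {V : Type*} [Fintype V] (G : SimpleGraph V) : ℕ :=
  ∑ v, (degN G v) ^ 2

/-- Number of edges of a graph. -/
noncomputable def numEdges {V : Type*} (G : SimpleGraph V) : ℕ :=
  Nat.card G.edgeSet

/-- Generalized hierarchical product of two simple graphs with respect to a
set `U` of vertices of the second graph. -/
def graphHier {V₁ V₂ : Type*} (G₁ : SimpleGraph V₁) (G₂ : SimpleGraph V₂)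
    (U : Set V₂) : SimpleGraph (V₁ × V₂) where
  Adj x y := (x.1 = y.1 ∧ G₂.Adj x.2 y.2) ∨ (x.2 = y.2 ∧ x.2 ∈ U ∧ G₁.Adj x.1 y.1)
  symm := by
    constructor
    rintro ⟨a, b⟩ ⟨c, d⟩ (⟨h1, h2⟩ | ⟨h1, h2, h3⟩)
    · exact Or.inl ⟨h1.symm, h2.symm⟩
    · exact Or.inr ⟨h1.symm, h1 ▸ h2, h3.symm⟩
  loopless := by
    constructor
    rintro ⟨a, b⟩ (⟨_, h2⟩ | ⟨_, _, h3⟩)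
    · exact G₂.loopless.irrefl b h2
    · exact G₁.loopless.irrefl a h3

/-! A vertex `(u, v)` of `G₁ Π G₂(U)` has degree `d₁(u) + d₂(v)` if `v ∈ U` and `d₂(v)` otherwise.
So for fixed `v ∈ U` the sum of cubes over the fiber `V₁ × {v}` expands binomially into
`F(G₁) + 3 M₁(G₁) d₂(v) + 6 m₁ d₂(v)² + n₁ d₂(v)³`, using `∑ d₁ = 2 m₁`, while for `v ∉ U` it is
`n₁ d₂(v)³`; summing over `v` gives the formula. -/

section

variable {V V₁ V₂ : Type*}

lemma degN_eq_degree (G : SimpleGraph V) (v : V) [Fintype (G.neighborSet v)] :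
    degN G v = G.degree v := by
  rw [degN, Nat.card_eq_fintype_card, SimpleGraph.card_neighborSet_eq_degree]

lemma sum_degN [Fintype V] (G : SimpleGraph V) : ∑ v, degN G v = 2 * numEdges G := by
  classical
  simp_rw [degN_eq_degree]
  rw [SimpleGraph.sum_degrees_eq_twice_card_edges, numEdges, Nat.card_eq_fintype_card,
    SimpleGraph.edgeFinset, Set.toFinset_card]

lemma sum_degN_add_pow_three [Fintype V] (G : SimpleGraph V) (b : ℕ) :
    ∑ u, (degN G u + b) ^ 3 =
      Findex G + 3 * zagrebM1 G * b + 6 * numEdges G * b ^ 2 + Fintype.card V * b ^ 3 := by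
  have expand : ∀ u, (degN G u + b) ^ 3 =
      degN G u ^ 3 + 3 * b * degN G u ^ 2 + 3 * b ^ 2 * degN G u + b ^ 3 := fun u => by ring
  simp_rw [expand, sum_add_distrib, ← mul_sum, sum_const, card_univ, smul_eq_mul, sum_degN,
    Findex, zagrebM1]
  ring

namespace graphHier

variable (G₁ : SimpleGraph V₁) (G₂ : SimpleGraph V₂) {U : Set V₂} (u : V₁) {v : V₂}

lemma neighborSet_of_mem (hv : v ∈ U) :
    (graphHier G₁ G₂ U).neighborSet (u, v) =
      Prod.mk u '' G₂.neighborSet v ∪ (·, v) '' G₁.neighborSet u := by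
  ext ⟨a, b⟩
  simp only [SimpleGraph.mem_neighborSet, Set.mem_union, Set.mem_image, Prod.mk.injEq]
  constructor
  · rintro (⟨rfl, hb⟩ | ⟨rfl, -, ha⟩)
    exacts [Or.inl ⟨b, hb, rfl, rfl⟩, Or.inr ⟨a, ha, rfl, rfl⟩]
  · rintro (⟨b, hb, rfl, rfl⟩ | ⟨a, ha, rfl, rfl⟩)
    exacts [Or.inl ⟨rfl, hb⟩, Or.inr ⟨rfl, hv, ha⟩]

lemma neighborSet_of_not_mem (hv : v ∉ U) :
    (graphHier G₁ G₂ U).neighborSet (u, v) = Prod.mk u '' G₂.neighborSet v := by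
  ext ⟨a, b⟩
  simp only [SimpleGraph.mem_neighborSet, Set.mem_image, Prod.mk.injEq]
  constructor
  · rintro (⟨rfl, hb⟩ | ⟨rfl, hv', -⟩)
    exacts [⟨b, hb, rfl, rfl⟩, absurd hv' hv]
  · rintro ⟨b, hb, rfl, rfl⟩
    exact Or.inl ⟨rfl, hb⟩

lemma degN_of_mem [Finite V₁] [Finite V₂] (hv : v ∈ U) :
    degN (graphHier G₁ G₂ U) (u, v) = degN G₁ u + degN G₂ v := by
  have disjoint : Disjoint (Prod.mk u '' G₂.neighborSet v) ((·, v) '' G₁.neighborSet u) := by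
    rw [Set.disjoint_left]
    rintro _ ⟨b, hb, rfl⟩ ⟨a, ha, hab⟩
    obtain ⟨rfl, rfl⟩ := Prod.mk.inj hab
    exact G₂.loopless.irrefl _ hb
  simp only [degN, Nat.card_coe_set_eq, neighborSet_of_mem G₁ G₂ u hv]
  rw [Set.ncard_union_eq disjoint, Set.ncard_image_of_injective _ (Prod.mk_right_injective u),
    Set.ncard_image_of_injective _ (Prod.mk_left_injective v), add_comm]

lemma degN_of_not_mem (hv : v ∉ U) :
    degN (graphHier G₁ G₂ U) (u, v) = degN G₂ v := by
  rw [degN, neighborSet_of_not_mem G₁ G₂ u hv,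
    Nat.card_image_of_injective (Prod.mk_right_injective u), degN]

lemma sum_degN_pow_three_fiber [Fintype V₁] [Finite V₂] [Decidable (v ∈ U)] :
    ∑ u, degN (graphHier G₁ G₂ U) (u, v) ^ 3 =
      Fintype.card V₁ * degN G₂ v ^ 3 +
        if v ∈ U then
          Findex G₁ + 3 * zagrebM1 G₁ * degN G₂ v + 6 * numEdges G₁ * degN G₂ v ^ 2
        else 0 := by
  split_ifs with hv
  · simp_rw [degN_of_mem G₁ G₂ _ hv, sum_degN_add_pow_three]
    ring
  · simp [degN_of_not_mem G₁ G₂ _ hv]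

end graphHier

end

theorem Findex_hier_general {V₁ V₂ : Type*} [Fintype V₁] [Fintype V₂]
    (G₁ : SimpleGraph V₁) (G₂ : SimpleGraph V₂)
    (U : Finset V₂)
    (n₁ m₁ : ℕ) (hn₁ : Fintype.card V₁ = n₁) (hm₁ : numEdges G₁ = m₁) :
    Findex (graphHier G₁ G₂ (↑U : Set V₂)) =
      U.card * Findex G₁ + n₁ * Findex G₂
        + 3 * zagrebM1 G₁ * (∑ v ∈ U, degN G₂ v)
        + 6 * m₁ * (∑ v ∈ U, (degN G₂ v) ^ 2) := by
  classical
  subst hn₁ hm₁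
  rw [Findex, Fintype.sum_prod_type_right,
    Fintype.sum_congr _ _ fun v => graphHier.sum_degN_pow_three_fiber G₁ G₂ (U := ↑U) (v := v)]
  simp only [Finset.mem_coe, sum_add_distrib, sum_ite_mem, univ_inter, ← mul_sum, sum_const,
    smul_eq_mul, Findex]
  ring

theorem Findex_hier {V₁ V₂ : Type*} [Fintype V₁] [Fintype V₂]
    (G₁ : SimpleGraph V₁) (G₂ : SimpleGraph V₂)
    (U : Finset V₂) (hU : U.Nonempty)
    (n₁ m₁ : ℕ) (hn₁ : Fintype.card V₁ = n₁) (hm₁ : numEdges G₁ = m₁) :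
    Findex (graphHier G₁ G₂ (↑U : Set V₂)) =
      U.card * Findex G₁ + n₁ * Findex G₂
        + 3 * zagrebM1 G₁ * (∑ v ∈ U, degN G₂ v)
        + 6 * m₁ * (∑ v ∈ U, (degN G₂ v) ^ 2) :=
  Findex_hier_general G₁ G₂ U n₁ m₁ hn₁ hm₁
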